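/- Let (Z,S) be a nondegenerate symmetric set, and suppose Z = X ∪ Y where X and Y are disjoint nonempty invariant subsets such that the restrictions of S to X × X and to Y × Y are themselves nondegenerate (this is automatic if Z is finite). Then S maps X × Y into Y × X and maps Y × X into X × Y; since S is a bijection, S restricts to bijections X × Y → Y × X and Y × X → X × Y. -/
import Mathlib


/-- `(Z,S)` is nondegenerate. -/
def Nondeg {Z : Type*} (S : Z × Z → Z × Z) : Prop :=
  (∀ y : Z, Function.Bijective fun x => (S (x, y)).2) ∧
  (∀ x : Z, Function.Bijective fun y => (S (x, y)).1)

/-- `S^{12} : Z³ → Z³`. -/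
def S12 {Z : Type*} (S : Z × Z → Z × Z) : Z × Z × Z → Z × Z × Z :=
  fun p => ((S (p.1, p.2.1)).1, (S (p.1, p.2.1)).2, p.2.2)

/-- `S^{23} : Z³ → Z³`. -/
def S23 {Z : Type*} (S : Z × Z → Z × Z) : Z × Z × Z → Z × Z × Z :=
  fun p => (p.1, (S (p.2.1, p.2.2)).1, (S (p.2.1, p.2.2)).2)

/-- `(Z,S)` is braided. -/
def Braided {Z : Type*} (S : Z × Z → Z × Z) : Prop :=
  S12 S ∘ S23 S ∘ S12 S = S23 S ∘ S12 S ∘ S23 S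

/-- `(Z,S)` is involutive. -/
def Invol {Z : Type*} (S : Z × Z → Z × Z) : Prop := S ∘ S = id

/-- `A` is an invariant subset: `S(A × A) ⊆ A × A`. -/
def InvSubset {Z : Type*} (S : Z × Z → Z × Z) (A : Set Z) : Prop :=
  ∀ a ∈ A, ∀ b ∈ A, (S (a, b)).1 ∈ A ∧ (S (a, b)).2 ∈ A

/-- The restriction of `S` to an invariant subset `A` is nondegenerate: for each
`b ∈ A`, `a ↦ (S (a,b)).2` is a bijection of `A`, and for each `a ∈ A`,
`b ↦ (S (a,b)).1` is a bijection of `A`. -/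
def NondegOn {Z : Type*} (S : Z × Z → Z × Z) (A : Set Z) : Prop :=
  (∀ b ∈ A, Set.BijOn (fun a => (S (a, b)).2) A A) ∧
  (∀ a ∈ A, Set.BijOn (fun b => (S (a, b)).1) A A)

lemma mapsTo_compl_of_bijOn {Z : Type*} (f : Z → Z) (hf : Function.Injective f)
    (X Y : Set Z) (hdisj : Disjoint X Y) (hunion : X ∪ Y = Set.univ)
    (hbij : Set.BijOn f Y Y) : ∀ x ∈ X, f x ∈ X := by
  intro x hx
  have hfx : f x ∈ X ∪ Y := hunion ▸ Set.mem_univ _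
  rcases hfx with h | h
  · exact h
  · obtain ⟨y, hy, hfy⟩ := hbij.surjOn h
    have hxy : y = x := hf hfy
    exact absurd hx (fun hx' => Set.disjoint_left.mp hdisj hx' (hxy ▸ hy))

/-- Proposition 2.15: if a nondegenerate symmetric set `(Z,S)` is the union of two
disjoint nonempty nondegenerate invariant subsets `X` and `Y`, then `S` restricts to
bijections `X × Y → Y × X` and `Y × X → X × Y`. -/
theorem union_swaps_products {Z : Type*} (S : Z × Z → Z × Z)
    (hnd : Nondeg S) (hbr : Braided S) (hinv : Invol S)
    (X Y : Set Z) (hX : X.Nonempty) (hY : Y.Nonempty)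
    (hdisj : Disjoint X Y) (hunion : X ∪ Y = Set.univ)
    (hXinv : InvSubset S X) (hYinv : InvSubset S Y)
    (hXnd : NondegOn S X) (hYnd : NondegOn S Y) :
    Set.BijOn S (X ×ˢ Y) (Y ×ˢ X) ∧ Set.BijOn S (Y ×ˢ X) (X ×ˢ Y) := by
  have hSS : ∀ p, S (S p) = p := fun p => congrFun hinv p
  have hSinj : Function.Injective S := fun a b h => by
    have := hSS a; rw [h, hSS] at this; exact this.symm
  have hdisj' : Disjoint Y X := hdisj.symm
  have hunion' : Y ∪ X = Set.univ := by rw [Set.union_comm]; exact hunion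
  -- x ∈ X, y ∈ Y : S (x,y) ∈ Y ×ˢ X
  have h1 : ∀ x ∈ X, ∀ y ∈ Y, (S (x, y)).1 ∈ Y ∧ (S (x, y)).2 ∈ X := by
    intro x hx y hy
    constructor
    · exact mapsTo_compl_of_bijOn (fun b => (S (x, b)).1) (hnd.2 x).injective
        Y X hdisj' hunion' (hXnd.2 x hx) y hy
    · exact mapsTo_compl_of_bijOn (fun a => (S (a, y)).2) (hnd.1 y).injective
        X Y hdisj hunion (hYnd.1 y hy) x hx
  -- y ∈ Y, x ∈ X : S (y,x) ∈ X ×ˢ Y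
  have h2 : ∀ y ∈ Y, ∀ x ∈ X, (S (y, x)).1 ∈ X ∧ (S (y, x)).2 ∈ Y := by
    intro y hy x hx
    constructor
    · exact mapsTo_compl_of_bijOn (fun b => (S (y, b)).1) (hnd.2 y).injective
        X Y hdisj hunion (hYnd.2 y hy) x hx
    · exact mapsTo_compl_of_bijOn (fun a => (S (a, x)).2) (hnd.1 x).injective
        Y X hdisj' hunion' (hXnd.1 x hx) y hy
  have hm1 : Set.MapsTo S (X ×ˢ Y) (Y ×ˢ X) := by
    rintro ⟨x, y⟩ ⟨hx, hy⟩
    exact h1 x hx y hy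
  have hm2 : Set.MapsTo S (Y ×ˢ X) (X ×ˢ Y) := by
    rintro ⟨y, x⟩ ⟨hy, hx⟩
    exact h2 y hy x hx
  constructor
  · refine ⟨hm1, hSinj.injOn, ?_⟩
    intro q hq
    exact ⟨S q, hm2 hq, hSS q⟩
  · refine ⟨hm2, hSinj.injOn, ?_⟩
    intro q hq
    exact ⟨S q, hm1 hq, hSS q⟩
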